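/- arXiv:2002.12288 — 2 statements merged into one kernel-verified Lean document; each statement's English description precedes it below -/
import Mathlib

section
/- Let X be a scheme, V a vector bundle and L a line bundle on X, and let 0 → V →^i F →^π L → 0 be a short exact sequence of vector bundles. Then the O_X-linear map α : F ⊗ F → F ⊗ L defined by α(f₁ ⊗ f₂) = f₁ ⊗ π(f₂) - f₂ ⊗ π(f₁) has image exactly the subbundle V ⊗ L ⊂ F ⊗ L. -/
open TensorProduct

/-- (module-theoretic formulation of the statement for sheaves of
modules) Given a short exact sequence `0 → V →ⁱ F →^π L → 0` of (projective =
locally free) modules, with `L` a line bundle (flat, and with symmetric tensor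
square, as holds for invertible modules), the map `α : F ⊗ F → F ⊗ L`,
`α(f₁ ⊗ f₂) = f₁ ⊗ π(f₂) - f₂ ⊗ π(f₁)`, has image exactly the submodule
`V ⊗ L ⊆ F ⊗ L`. -/
theorem stmt_5 (R : Type*) [CommRing R]
    (V F L : Type*) [AddCommGroup V] [Module R V] [AddCommGroup F] [Module R F]
    [AddCommGroup L] [Module R L]
    [Module.Projective R V] [Module.Projective R F] [Module.Projective R L]
    [Module.Flat R L]
    (i : V →ₗ[R] F) (π : F →ₗ[R] L)
    (hi : Function.Injective i) (hπ : Function.Surjective π)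
    (hex : LinearMap.range i = LinearMap.ker π)
    (hline : ∀ l l' : L, (l ⊗ₜ[R] l' : L ⊗[R] L) = l' ⊗ₜ[R] l) :
    LinearMap.range
        ((TensorProduct.map (LinearMap.id : F →ₗ[R] F) π)
          - (TensorProduct.map (LinearMap.id : F →ₗ[R] F) π ∘ₗ
              (TensorProduct.comm R F F).toLinearMap))
      = LinearMap.range (TensorProduct.map i (LinearMap.id : L →ₗ[R] L)) := by
  -- splitting of π
  obtain ⟨s, hs⟩ := Module.projective_lifting_property (R := R) π (LinearMap.id) hπ
  have hsl : ∀ l, π (s l) = l := fun l => congrArg (· l) hs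
  -- exactness V⊗L → F⊗L → L⊗L
  have hexact : Function.Exact i π := by
    rw [LinearMap.exact_iff]; exact hex.symm
  have hrex : Function.Exact (LinearMap.rTensor L i) (LinearMap.rTensor L π) :=
    rTensor_exact L hexact hπ
  apply le_antisymm
  · rintro x ⟨y, rfl⟩
    -- show it's in ker (rTensor L π)
    have hker : LinearMap.rTensor L π
        (((TensorProduct.map (LinearMap.id : F →ₗ[R] F) π)
          - (TensorProduct.map (LinearMap.id : F →ₗ[R] F) π ∘ₗ
              (TensorProduct.comm R F F).toLinearMap)) y) = 0 := by
      induction y using TensorProduct.induction_on with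
      | zero => simp
      | tmul f₁ f₂ =>
        simp [LinearMap.rTensor_tmul, hline (π f₁) (π f₂), sub_self]
      | add a b ha hb =>
        simp only [map_add, LinearMap.sub_apply, LinearMap.coe_comp,
          Function.comp_apply, LinearEquiv.coe_coe, map_sub] at ha hb ⊢
        rw [sub_eq_zero] at ha hb
        rw [ha, hb]
        abel
    have := (hrex _).mp hker
    obtain ⟨z, hz⟩ := this
    refine ⟨z, ?_⟩
    have : LinearMap.rTensor L i = TensorProduct.map i (LinearMap.id : L →ₗ[R] L) := rfl
    rw [← this, hz]
  · rintro x ⟨y, rfl⟩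
    induction y using TensorProduct.induction_on with
    | zero => simp
    | tmul v l =>
      refine ⟨i v ⊗ₜ[R] s l, ?_⟩
      have hv : π (i v) = 0 := by
        rw [← LinearMap.mem_ker, ← hex]; exact ⟨v, rfl⟩
      simp [hv, hsl]
    | add a b ha hb =>
      obtain ⟨ya, hya⟩ := ha
      obtain ⟨yb, hyb⟩ := hb
      exact ⟨ya + yb, by simp [map_add, hya, hyb]⟩
end

section
/- Let π : M → S be a smooth morphism with a line bundle L on M, and let W = D^{(1)}_M(L) + D^{(2)}_{M/S}(L) ⊂ D^{(2)}_M(L). The subprincipal symbol σ_S : W → π*T_S, defined by ⟨σ_S(D), d(π*f)⟩ s = D(π*f · s) - π*f · D(s) for local sections f of O_S and s of L, is a well-defined O_M-linear map, and it fits into a short exact sequence 0 → D^{(1)}_{M/S}(L) → W → π*(T_S) ⊕ Sym² T_{M/S} → 0 where the second component is the second-order symbol σ₂. -/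
/-- The operation `D ↦ [D, a•] : s ↦ D(a•s) - a•D(s)`, used to define the order
filtration on differential operators: `D` has order `≤ n+1` iff all `brkt a D`
have order `≤ n`, and order `≤ 0` means `O_M`-linear. -/
def brkt {A L : Type*} [CommRing A] [AddCommGroup L] [Module A L]
    (a : A) (f : L → L) : L → L :=
  fun s => f (a • s) - a • f s

/-- (local model: `k` the base field of characteristic ≠ 2,
`C = O_S`, `A = O_M`, `L` a line bundle on `M`, which is a faithful invertible
module, so that `A`-linear endomorphisms of `L` are multiplications by
functions).  Let `W = D⁽¹⁾_M(L) + D⁽²⁾_{M/S}(L)` (membership in `W` is the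
existential decomposition below).  Then for every `D ∈ W`:
 (1) the subprincipal symbol `σ_S` is well defined: for each `f ∈ O_S` there is
     a unique function `a ∈ O_M` with `⟨σ_S(D), d(π*f)⟩s = D(π*f·s) - π*f·D(s)
     = a•s`;
 (2) `σ_S(D)` satisfies the Leibniz rule in `f` (so it is a genuine section of
     `π*T_S`);
 (3) `σ_S` is `O_M`-linear in `D`;
 (4) exactness: `σ_S(D) = 0` and `σ₂(D) = 0` if and only if
     `D ∈ D⁽¹⁾_{M/S}(L)`, i.e. `D` has order ≤ 1 and is `π⁻¹O_S`-linear — this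
     expresses the short exact sequence
     `0 → D⁽¹⁾_{M/S}(L) → W → π*T_S ⊕ Sym² T_{M/S} → 0` whose second component
     is the second-order symbol `σ₂`. -/
theorem stmt_11
    (k : Type*) [Field k] (hchar : (2 : k) ≠ 0)
    (C : Type*) [CommRing C] [Algebra k C]
    (A : Type*) [CommRing A] [Algebra k A] [Algebra C A] [IsScalarTower k C A]
    (L : Type*) [AddCommGroup L] [Module k L] [Module C L] [Module A L]
    [IsScalarTower k A L] [IsScalarTower C A L] [IsScalarTower k C L]
    (hfaith : ∀ a : A, (∀ s : L, a • s = 0) → a = 0)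
    (hline : ∀ g : L →ₗ[k] L, (∀ (a : A) (s : L), g (a • s) = a • g s) →
      ∃ a : A, ∀ s : L, g s = a • s) :
    ∀ D : L →ₗ[k] L,
      (∃ D1 D2 : L →ₗ[k] L,
        D = D1 + D2
        ∧ (∀ (a b : A) (s : L), brkt b (brkt a ⇑D1) s = 0)
        ∧ (∀ (a b c : A) (s : L), brkt c (brkt b (brkt a ⇑D2)) s = 0)
        ∧ (∀ (f : C) (s : L), D2 (f • s) = f • D2 s)) →
      ((∀ f : C, ∃! a : A, ∀ s : L, D (f • s) - f • D s = a • s)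
      ∧ (∀ (f g : C) (af ag afg : A),
          (∀ s : L, D (f • s) - f • D s = af • s) →
          (∀ s : L, D (g • s) - g • D s = ag • s) →
          (∀ s : L, D ((f * g) • s) - (f * g) • D s = afg • s) →
          afg = algebraMap C A f * ag + algebraMap C A g * af)
      ∧ (∀ (φ : A) (f : C) (a : A),
          (∀ s : L, D (f • s) - f • D s = a • s) →
          ∀ s : L, φ • D (f • s) - f • (φ • D s) = (φ * a) • s)
      ∧ (((∀ (f : C) (s : L), D (f • s) = f • D s)
            ∧ (∀ (a b : A) (s : L),
                D ((a * b) • s) - a • D (b • s) - b • D (a • s) + (a * b) • D s = 0))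
          ↔ ((∀ (a b : A) (s : L), brkt b (brkt a ⇑D) s = 0)
            ∧ (∀ (f : C) (s : L), D (f • s) = f • D s)))) := by
  
  intro D ⟨D1, D2, hD, h1, _h2, hC⟩
  -- brkt expansion for any k-linear map
  have hbr : ∀ (E : L →ₗ[k] L) (a b : A) (s : L),
      brkt b (brkt a ⇑E) s
        = E ((a * b) • s) - a • E (b • s) - b • E (a • s) + (a * b) • E s := by
    intro E a b s
    simp only [brkt, smul_sub, smul_smul, mul_comm b a]
    abel
  -- D2 is also A-compatible with C-scalars via the tower
  have hC2 : ∀ (f : C) (s : L), D2 (algebraMap C A f • s) = algebraMap C A f • D2 s := by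
    intro f s
    rw [algebraMap_smul, algebraMap_smul]
    exact hC f s
  -- the symbol of D at f is that of D1
  have hsub : ∀ (f : C) (s : L),
      D (f • s) - f • D s = D1 (algebraMap C A f • s) - algebraMap C A f • D1 s := by
    intro f s
    rw [hD]
    simp only [LinearMap.add_apply, algebraMap_smul, smul_add, hC f s]
    abel
  -- order ≤ 1 identity for D1
  have key1 : ∀ (a b : A) (s : L),
      D1 ((a * b) • s) - (a * b) • D1 s
        = a • (D1 (b • s) - b • D1 s) + b • (D1 (a • s) - a • D1 s) := by
    intro a b s
    have h' := h1 a b s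
    rw [hbr] at h'
    linear_combination (norm := module) h'
  -- brkt a D1 is A-linear
  have hAlin : ∀ (F : A), ∃ a : A, ∀ s : L, D1 (F • s) - F • D1 s = a • s := by
    intro F
    have hg : ∀ (b : A) (s : L),
        D1 (F • (b • s)) - F • D1 (b • s) = b • (D1 (F • s) - F • D1 s) := by
      intro b s
      have h' := h1 F b s
      rw [hbr] at h'
      rw [smul_smul]
      linear_combination (norm := module) h'
    obtain ⟨a, ha⟩ := hline
      { toFun := fun s => D1 (F • s) - F • D1 s
        map_add' := by intro x y; simp only [map_add, smul_add]; abel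
        map_smul' := by
          intro c x
          simp only [RingHom.id_apply, smul_sub]
          have e : ∀ y : L, F • c • y = c • F • y := fun y => by
            rw [← algebraMap_smul A c y, ← algebraMap_smul A c (F • y),
              smul_smul, smul_smul, mul_comm]
          rw [e x, D1.map_smul, D1.map_smul, e (D1 x)] }
      (by intro b s; exact hg b s)
    exact ⟨a, fun s => ha s⟩
  have huniq : ∀ a a' : A, (∀ s : L, a • s = a' • s) → a = a' := by
    intro a a' h
    have : ∀ s : L, (a - a') • s = 0 := by
      intro s; rw [sub_smul, h s, sub_self]
    exact sub_eq_zero.mp (hfaith _ this)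
  refine ⟨?_, ?_, ?_, ?_⟩
  · -- (1) existence and uniqueness of the subprincipal symbol
    intro f
    obtain ⟨a, ha⟩ := hAlin (algebraMap C A f)
    refine ⟨a, fun s => by rw [hsub f s]; exact ha s, ?_⟩
    intro a' ha'
    refine huniq a' a (fun s => ?_)
    rw [← ha' s, hsub f s, ha s]
  · -- (2) Leibniz rule
    intro f g af ag afg hf hg hfg
    refine huniq afg _ (fun s => ?_)
    have e1 : afg • s = D ((f * g) • s) - (f * g) • D s := (hfg s).symm
    rw [hsub (f * g) s, map_mul] at e1
    rw [key1 (algebraMap C A f) (algebraMap C A g) s] at e1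
    have ef : D1 (algebraMap C A g • s) - algebraMap C A g • D1 s = ag • s := by
      rw [← hsub g s]; exact hg s
    have eg : D1 (algebraMap C A f • s) - algebraMap C A f • D1 s = af • s := by
      rw [← hsub f s]; exact hf s
    rw [ef, eg, smul_smul, smul_smul] at e1
    rw [e1, add_smul]
  · -- (3) O_M-linearity in D
    intro φ f a ha s
    have : f • (φ • D s) = φ • (f • D s) := by
      rw [← algebraMap_smul A f (D s), ← algebraMap_smul A f (φ • D s),
        smul_smul, smul_smul, mul_comm]
    rw [this, ← smul_sub, ha s, smul_smul]
  · -- (4) exactness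
    constructor
    · rintro ⟨hlin, hord⟩
      refine ⟨fun a b s => ?_, hlin⟩
      rw [hbr]
      have := hord a b s
      linear_combination (norm := module) this
    · rintro ⟨hord, hlin⟩
      refine ⟨hlin, fun a b s => ?_⟩
      have := hord a b s
      rw [hbr] at this
      linear_combination (norm := module) this
end
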